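/- arXiv:0707.1570 — 2 statements merged into one kernel-verified Lean document; each statement's English description precedes it below -/
import Mathlib

section
/- There exists an absolute constant c' > 0 such that for every n ≥ 3, every unit vector θ ∈ S^{n−1}, and every α with c/√n ≤ α ≤ 1/4 (for a suitable absolute constant c), one has σ{ P ∈ S^{n−1} : |⟨P,θ⟩| > α } ≥ c'·e^{−4α²n}. -/
/-!
Cutting the unit ball into radial segments shows that `σ {|⟪P, θ⟫| > α}` is at least the
relative volume of the cap `{‖x‖ < 1, ⟪x, θ⟫ > α}` in the unit ball. After rotating `θ` to the first
basis vector, the cap contains the cylinder `(α, α + β) × B(√(1 - (α + β)²))` with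
`β = 1 / (2√(n - 1))`, whose volume is `β (1 - (α + β)²)^((n - 1)/2) V_{n-1} ≳ e^{-2α²n} V_{n-1} / √n`.
On the other hand, slicing the unit ball along the first coordinate and using `1 - t² ≤ e^{-t²}`
gives `V_n ≤ √(2π / (n - 1)) V_{n-1}`, and the two bounds combine to the claim.
-/

open MeasureTheory
open scoped RealInnerProductSpace

/-- The uniform (rotation invariant) probability measure on the unit sphere
`S^{n-1} ⊆ ℝⁿ`, viewed as a measure on the ambient space `ℝⁿ`. -/
noncomputable def sphereUniform (n : ℕ) : Measure (EuclideanSpace ℝ (Fin n)) :=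
  Measure.map Subtype.val
    ((((volume : Measure (EuclideanSpace ℝ (Fin n))).toSphere) Set.univ)⁻¹ •
      ((volume : Measure (EuclideanSpace ℝ (Fin n))).toSphere))

open Metric
open scoped Pointwise

namespace Real

theorem exp_neg_two_mul_le_one_sub {u : ℝ} (hu₀ : 0 ≤ u) (hu : u ≤ 1 / 2) :
    exp (-(2 * u)) ≤ 1 - u := by
  rw [exp_neg, inv_le_iff_one_le_mul₀ (exp_pos _)]
  nlinarith [add_one_le_exp (2 * u)]

theorem exp_neg_mul_le_sqrt_one_sub_pow (m : ℕ) {u : ℝ} (hu₀ : 0 ≤ u) (hu : u ≤ 1 / 2) :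
    exp (-(m * u)) ≤ √(1 - u) ^ m := by
  have h : exp (-u) ≤ √(1 - u) := by
    rw [le_sqrt (exp_pos _).le (by linarith), ← exp_nat_mul]
    simpa using exp_neg_two_mul_le_one_sub hu₀ hu
  rw [neg_mul_eq_mul_neg, exp_nat_mul]
  exact pow_le_pow_left₀ (exp_pos _).le h m

end Real

open Real in
theorem exp_mul_sqrt_le_cylinder_factor {m : ℕ} (hm : 2 ≤ m) {α : ℝ} (hα₀ : 0 ≤ α)
    (hα : α ≤ 1 / 4) :
    1 / 20 * exp (-4 * α ^ 2 * (m + 1)) * √(2 * π / m)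
      ≤ 1 / (2 * √m) * √(1 - (α + 1 / (2 * √m)) ^ 2) ^ m := by
  have hm' : (2 : ℝ) ≤ m := by exact_mod_cast hm
  set s := √(m : ℝ)
  have hs : 0 < s := sqrt_pos.2 (by linarith)
  have hs2 : s ^ 2 = m := sq_sqrt (by linarith)
  set β := 1 / (2 * s) with hβ_def
  have hβ : m * β ^ 2 = 1 / 4 := by
    rw [← hs2, hβ_def]; field_simp; ring
  set u := (α + β) ^ 2
  have hmu : m * u ≤ 2 * m * α ^ 2 + 1 / 2 := by nlinarith [sq_nonneg (α - β)]
  have hu : u ≤ 1 / 2 := by nlinarith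
  set E := exp (-(2 * m * α ^ 2))
  have hpow : E * (1 / 2) ≤ √(1 - u) ^ m :=
    calc E * (1 / 2) ≤ E * exp (-(1 / 2)) := by gcongr; linarith [add_one_le_exp (-(1 / 2))]
      _ = exp (-(2 * m * α ^ 2 + 1 / 2)) := by rw [← exp_add]; ring_nf
      _ ≤ exp (-(m * u)) := exp_le_exp.2 (by linarith)
      _ ≤ √(1 - u) ^ m := exp_neg_mul_le_sqrt_one_sub_pow m (sq_nonneg _) hu
  have hsqrt : √(2 * π / m) ≤ 3 / s := by
    rw [sqrt_div' _ (by linarith : (0:ℝ) ≤ m), div_le_div_iff_of_pos_right hs,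
      sqrt_le_left (by norm_num)]
    linarith [pi_lt_d2]
  calc 1 / 20 * exp (-4 * α ^ 2 * (m + 1)) * √(2 * π / m)
      ≤ 1 / 20 * E * (3 / s) := by
        gcongr
        exact exp_le_exp.2 (by nlinarith)
    _ = 3 / 5 * (β * (E * (1 / 2))) := by rw [hβ_def]; field_simp; ring
    _ ≤ β * (E * (1 / 2)) := by
        have : 0 < β * (E * (1 / 2)) := by positivity
        linarith
    _ ≤ β * √(1 - u) ^ m := by gcongr

section InnerProductSpace

variable {E : Type*} [NormedAddCommGroup E] [InnerProductSpace ℝ E]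

theorem volume_setOf_norm_inner_eq_of_norm_eq [FiniteDimensional ℝ E] [MeasurableSpace E]
    [BorelSpace E] (p : ℝ → ℝ → Prop) {θ θ' : E} (h : ‖θ‖ = ‖θ'‖) :
    volume {x | p ‖x‖ ⟪x, θ⟫} = volume {x | p ‖x‖ ⟪x, θ'⟫} := by
  set g := Submodule.reflection (ℝ ∙ (θ' - θ))ᗮ
  have hg : g θ' = θ := Submodule.reflection_sub h.symm
  have hpre : {x | p ‖x‖ ⟪x, θ'⟫} = g ⁻¹' {x | p ‖x‖ ⟪x, θ⟫} := by
    ext x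
    change p ‖x‖ ⟪x, θ'⟫ ↔ p ‖g x‖ ⟪g x, θ⟫
    rw [g.norm_map, ← hg, g.inner_map_map]
  rw [hpre]
  exact (g.measurePreserving.measure_preimage_equiv (f := g.toHomeomorph.toMeasurableEquiv) _).symm

theorem setOf_norm_lt_one_inner_gt_subset {α : ℝ} (hα : 0 ≤ α) (θ : E) :
    {x | ‖x‖ < 1 ∧ α < ⟪x, θ⟫} ⊆ Set.Ioo (0 : ℝ) 1 • ({P | α < |⟪P, θ⟫|} ∩ sphere 0 1) := by
  rintro x ⟨hx1, hxθ⟩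
  have hx : 0 < ‖x‖ := norm_pos_iff.2 (by rintro rfl; simp at hxθ; linarith)
  refine ⟨‖x‖, ⟨hx, hx1⟩, ‖x‖⁻¹ • x, ⟨?_, ?_⟩, smul_inv_smul₀ hx.ne' x⟩
  · change α < |⟪‖x‖⁻¹ • x, θ⟫|
    rw [real_inner_smul_left]
    calc α < ⟪x, θ⟫ := hxθ
      _ ≤ ‖x‖⁻¹ * ⟪x, θ⟫ := le_mul_of_one_le_left (by linarith) ((one_le_inv₀ hx).2 hx1.le)
      _ ≤ |‖x‖⁻¹ * ⟪x, θ⟫| := le_abs_self _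
  · rw [mem_sphere_zero_iff_norm, norm_smul, norm_inv, norm_norm, inv_mul_cancel₀ hx.ne']

end InnerProductSpace

namespace EuclideanSpace

variable {n : ℕ}

noncomputable def cons (t : ℝ) (y : EuclideanSpace ℝ (Fin n)) : EuclideanSpace ℝ (Fin (n + 1)) :=
  WithLp.toLp 2 (Fin.cons t y.ofLp)

theorem norm_cons_sq (t : ℝ) (y : EuclideanSpace ℝ (Fin n)) :
    ‖cons t y‖ ^ 2 = t ^ 2 + ‖y‖ ^ 2 := by
  simp [EuclideanSpace.norm_sq_eq, cons, Fin.sum_univ_succ]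

theorem volume_eq_lintegral_volume_cons {S : Set (EuclideanSpace ℝ (Fin (n + 1)))}
    (hS : MeasurableSet S) : volume S = ∫⁻ t, volume (cons t ⁻¹' S) := by
  let e : (ℝ × EuclideanSpace ℝ (Fin n)) ≃ᵐ EuclideanSpace ℝ (Fin (n + 1)) :=
    ((MeasurableEquiv.prodCongr (.refl ℝ) (MeasurableEquiv.toLp 2 (Fin n → ℝ)).symm).trans
      (MeasurableEquiv.piFinSuccAbove (fun _ => ℝ) 0).symm).trans
      (MeasurableEquiv.toLp 2 (Fin (n + 1) → ℝ))
  have he : MeasurePreserving e (volume.prod volume) volume :=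
    (((MeasurePreserving.id volume).prod (PiLp.volume_preserving_ofLp (Fin n))).trans
      (volume_preserving_piFinSuccAbove (fun _ => ℝ) 0).symm).trans
      (PiLp.volume_preserving_toLp (Fin (n + 1)))
  have he_apply : ∀ t y, e (t, y) = cons t y := fun t y => by
    simp [e, cons, MeasurableEquiv.piFinSuccAbove_symm_apply]
    rfl
  rw [← he.measure_preimage_equiv, Measure.prod_apply (e.measurable hS)]
  simp only [Set.preimage_preimage, he_apply]

theorem volume_ball_zero {r : ℝ} (hr : 0 < r) :
    volume (ball (0 : EuclideanSpace ℝ (Fin n)) r)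
      = ENNReal.ofReal (r ^ n) * volume (ball (0 : EuclideanSpace ℝ (Fin n)) 1) := by
  rw [Measure.addHaar_ball_of_pos _ _ hr, finrank_euclideanSpace_fin]

theorem volume_unitBall_succ_le (hn : n ≠ 0) :
    volume (ball (0 : EuclideanSpace ℝ (Fin (n + 1))) 1)
      ≤ ENNReal.ofReal √(2 * Real.pi / n) * volume (ball (0 : EuclideanSpace ℝ (Fin n)) 1) := by
  set V := volume (ball (0 : EuclideanSpace ℝ (Fin n)) 1)
  have hb : (0 : ℝ) < n / 2 := by positivity
  have hslice (t : ℝ) : cons (n := n) t ⁻¹' ball 0 1 ⊆ ball 0 (Real.exp (-t ^ 2 / 2)) := by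
    intro y hy
    rw [Set.mem_preimage, mem_ball_zero_iff] at hy
    rw [mem_ball_zero_iff]
    refine lt_of_pow_lt_pow_left₀ 2 (Real.exp_pos _).le ?_
    have h1 : ‖cons t y‖ ^ 2 < 1 := by nlinarith [norm_nonneg (cons t y)]
    rw [norm_cons_sq] at h1
    rw [← Real.exp_nat_mul, Nat.cast_ofNat, show (2 : ℝ) * (-t ^ 2 / 2) = -t ^ 2 by ring]
    linarith [Real.add_one_le_exp (-t ^ 2)]
  calc volume (ball (0 : EuclideanSpace ℝ (Fin (n + 1))) 1)
      = ∫⁻ t, volume (cons t ⁻¹' ball 0 1) := volume_eq_lintegral_volume_cons measurableSet_ball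
    _ ≤ ∫⁻ t, ENNReal.ofReal (Real.exp (-(n / 2) * t ^ 2)) * V := by
      refine lintegral_mono fun t => (measure_mono (hslice t)).trans_eq ?_
      rw [volume_ball_zero (Real.exp_pos _), ← Real.exp_nat_mul]
      congr 3
      ring
    _ = ENNReal.ofReal √(2 * Real.pi / n) * V := by
      rw [lintegral_mul_const' _ _ measure_ball_lt_top.ne,
        ← ofReal_integral_eq_lintegral_ofReal (integrable_exp_neg_mul_sq hb)
          (.of_forall fun _ => (Real.exp_pos _).le), integral_gaussian]
      congr 3
      field_simp

theorem ofReal_mul_volume_unitBall_le_volume_coord_cap {α β : ℝ} (hα : 0 ≤ α) (hβ : 0 < β)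
    (hαβ : α + β < 1) :
    ENNReal.ofReal (β * √(1 - (α + β) ^ 2) ^ n) * volume (ball (0 : EuclideanSpace ℝ (Fin n)) 1)
      ≤ volume {x : EuclideanSpace ℝ (Fin (n + 1)) | ‖x‖ < 1 ∧ α < x 0} := by
  set S := {x : EuclideanSpace ℝ (Fin (n + 1)) | ‖x‖ < 1 ∧ α < x 0}
  set γ := √(1 - (α + β) ^ 2)
  have hγ : γ ^ 2 = 1 - (α + β) ^ 2 := Real.sq_sqrt (by nlinarith)
  have hγ_pos : 0 < γ := Real.sqrt_pos.2 (by nlinarith)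
  have hS : MeasurableSet S :=
    (isOpen_lt continuous_norm continuous_const).measurableSet.inter
      (isOpen_lt continuous_const
        (by fun_prop : Continuous fun x : EuclideanSpace ℝ (Fin (n + 1)) => x 0)).measurableSet
  have hslice : ∀ t ∈ Set.Ioo α (α + β), ball 0 γ ⊆ cons t ⁻¹' S := by
    rintro t ⟨hαt, htβ⟩ y hy
    rw [mem_ball_zero_iff] at hy
    refine ⟨lt_of_pow_lt_pow_left₀ 2 zero_le_one ?_, hαt⟩
    rw [norm_cons_sq]
    nlinarith [norm_nonneg y]
  calc ENNReal.ofReal (β * γ ^ n) * volume (ball (0 : EuclideanSpace ℝ (Fin n)) 1)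
      = ∫⁻ t, (Set.Ioo α (α + β)).indicator
          (fun _ => volume (ball (0 : EuclideanSpace ℝ (Fin n)) γ)) t := by
        rw [lintegral_indicator_const measurableSet_Ioo, Real.volume_Ioo, volume_ball_zero hγ_pos,
          ENNReal.ofReal_mul hβ.le, add_sub_cancel_left]
        ring
    _ ≤ ∫⁻ t, volume (cons t ⁻¹' S) :=
        lintegral_mono fun t => Set.indicator_le (fun t ht => measure_mono (hslice t ht)) t
    _ = volume S := (volume_eq_lintegral_volume_cons hS).symm

theorem ofReal_mul_volume_unitBall_le_volume_cap {α β : ℝ} (hα : 0 ≤ α) (hβ : 0 < β)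
    (hαβ : α + β < 1) {θ : EuclideanSpace ℝ (Fin (n + 1))} (hθ : ‖θ‖ = 1) :
    ENNReal.ofReal (β * √(1 - (α + β) ^ 2) ^ n) * volume (ball (0 : EuclideanSpace ℝ (Fin n)) 1)
      ≤ volume {x : EuclideanSpace ℝ (Fin (n + 1)) | ‖x‖ < 1 ∧ α < ⟪x, θ⟫} := by
  have hθ₀ : ‖θ‖ = ‖EuclideanSpace.single (0 : Fin (n + 1)) (1 : ℝ)‖ := by simp [hθ]
  rw [volume_setOf_norm_inner_eq_of_norm_eq (fun r s => r < 1 ∧ α < s) hθ₀]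
  simpa [EuclideanSpace.inner_single_right] using
    ofReal_mul_volume_unitBall_le_volume_coord_cap (n := n) hα hβ hαβ

theorem ofReal_exp_mul_volume_unitBall_le_volume_cap {m : ℕ} (hm : 2 ≤ m) {α : ℝ}
    (hα₀ : 0 ≤ α) (hα : α ≤ 1 / 4) {θ : EuclideanSpace ℝ (Fin (m + 1))} (hθ : ‖θ‖ = 1) :
    ENNReal.ofReal (1 / 20 * Real.exp (-4 * α ^ 2 * (m + 1)))
        * volume (ball (0 : EuclideanSpace ℝ (Fin (m + 1))) 1)
      ≤ volume {x : EuclideanSpace ℝ (Fin (m + 1)) | ‖x‖ < 1 ∧ α < ⟪x, θ⟫} := by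
  have hs : 1 ≤ √(m : ℝ) := Real.one_le_sqrt.2 (by norm_cast; omega)
  have hβ : 0 < 1 / (2 * √(m : ℝ)) := by positivity
  have hαβ : α + 1 / (2 * √(m : ℝ)) < 1 := by
    have : 1 / (2 * √(m : ℝ)) ≤ 1 / 2 := by gcongr; linarith
    linarith
  calc ENNReal.ofReal (1 / 20 * Real.exp (-4 * α ^ 2 * (m + 1)))
        * volume (ball (0 : EuclideanSpace ℝ (Fin (m + 1))) 1)
      ≤ ENNReal.ofReal (1 / 20 * Real.exp (-4 * α ^ 2 * (m + 1)) * √(2 * Real.pi / m))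
        * volume (ball (0 : EuclideanSpace ℝ (Fin m)) 1) := by
        rw [ENNReal.ofReal_mul (p := 1 / 20 * Real.exp (-4 * α ^ 2 * (m + 1))) (by positivity),
          mul_assoc (ENNReal.ofReal _)]
        exact mul_le_mul_right (volume_unitBall_succ_le (n := m) (by omega)) _
    _ ≤ ENNReal.ofReal (1 / (2 * √(m : ℝ)) * √(1 - (α + 1 / (2 * √(m : ℝ))) ^ 2) ^ m)
        * volume (ball (0 : EuclideanSpace ℝ (Fin m)) 1) :=
        mul_le_mul_left (ENNReal.ofReal_le_ofReal
          (exp_mul_sqrt_le_cylinder_factor (by omega) hα₀ hα)) _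
    _ ≤ _ := ofReal_mul_volume_unitBall_le_volume_cap hα₀ hβ hαβ hθ

end EuclideanSpace

theorem sphereUniform_apply {n : ℕ} (hn : n ≠ 0) {T : Set (EuclideanSpace ℝ (Fin n))}
    (hT : MeasurableSet T) :
    sphereUniform n T = volume (Set.Ioo (0 : ℝ) 1 • (T ∩ sphere 0 1))
      / volume (ball (0 : EuclideanSpace ℝ (Fin n)) 1) := by
  rw [sphereUniform, Measure.map_apply measurable_subtype_coe hT, Measure.smul_apply, smul_eq_mul,
    Measure.toSphere_apply_univ, Measure.toSphere_apply' _ (measurable_subtype_coe hT),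
    Subtype.image_preimage_coe, Set.inter_comm, finrank_euclideanSpace_fin,
    ENNReal.mul_inv (.inl (by simpa using hn)) (.inl (ENNReal.natCast_ne_top n)), mul_mul_mul_comm,
    ENNReal.inv_mul_cancel (by simpa using hn) (ENNReal.natCast_ne_top n), one_mul,
    ENNReal.div_eq_inv_mul]

theorem volume_cap_div_le_sphereUniform {n : ℕ} (hn : n ≠ 0) {α : ℝ} (hα : 0 ≤ α)
    (θ : EuclideanSpace ℝ (Fin n)) :
    volume {x | ‖x‖ < 1 ∧ α < ⟪x, θ⟫} / volume (ball (0 : EuclideanSpace ℝ (Fin n)) 1)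
      ≤ sphereUniform n {P | α < |⟪P, θ⟫|} := by
  rw [sphereUniform_apply hn (measurableSet_lt measurable_const (by fun_prop))]
  gcongr
  exact setOf_norm_lt_one_inner_gt_subset hα θ

theorem stmt7 :
    ∃ c c' : ℝ, 0 < c ∧ 0 < c' ∧
      ∀ (n : ℕ), 3 ≤ n → ∀ θ : EuclideanSpace ℝ (Fin n), ‖θ‖ = 1 →
        ∀ α : ℝ, c / Real.sqrt n ≤ α → α ≤ 1 / 4 →
          ENNReal.ofReal (c' * Real.exp (-4 * α ^ 2 * n)) ≤
            sphereUniform n {P | α < |⟪P, θ⟫|} := by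
  refine ⟨1, 1 / 20, one_pos, by norm_num, ?_⟩
  intro n hn θ hθ α hαc hα
  obtain ⟨m, rfl⟩ : ∃ m, n = m + 1 := ⟨n - 1, by omega⟩
  have hα₀ : 0 ≤ α := le_trans (by positivity) hαc
  refine le_trans ?_ (volume_cap_div_le_sphereUniform m.succ_ne_zero hα₀ θ)
  rw [ENNReal.le_div_iff_mul_le (.inl (measure_ball_pos _ _ one_pos).ne')
    (.inl measure_ball_lt_top.ne), Nat.cast_succ]
  exact EuclideanSpace.ofReal_exp_mul_volume_unitBall_le_volume_cap (by omega) hα₀ hα hθ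
end

section
/- Let A be an absolute constant such that ‖√n⟨·,θ⟩‖_{ψ₂} ≤ A for all unit vectors θ. If P₁, …, P_n are independent random vectors uniformly distributed on S^{n−1}, then for every ε > 0, P{ |Σ_{i=1}^n P_i| < 2εn } ≥ 1 − 2·e^{−ε²n²/(8A²) + n·log 5}, where |·| is the Euclidean norm of the vector sum. -/
/-!
If `|∑ Pᵢ| ≥ 2εn`, a point `θ` of a `1/2`-net of the sphere within `1/2` of the direction of the
sum satisfies `⟨∑ Pᵢ, θ⟩ ≥ εn`, and a volume argument gives a net of at most `5ⁿ` points. For a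
fixed `θ` the summands `⟨Pᵢ, θ⟩` are independent, and the `ψ₂` bound gives
`𝔼 exp (t ⟨Pᵢ, θ⟩) ≤ 2 exp (t² A² / 4n)`, so a Chernoff bound with the optimal `t` yields
`ℙ(⟨∑ Pᵢ, θ⟩ ≥ εn) ≤ 2ⁿ exp (-ε²n²/A²)`. A union bound over the net finishes the proof, since
`2ⁿ ≤ exp (ε²n²/8A²)` as soon as the claimed lower bound is positive.
-/

open MeasureTheory
open scoped RealInnerProductSpace

open Metric Module ProbabilityTheory Real
open scoped NNReal ENNReal

section SphereNet

variable {E : Type*} [NormedAddCommGroup E] [NormedSpace ℝ E] [FiniteDimensional ℝ E]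

lemma card_le_of_isSeparated_subset_sphere {ε : ℝ≥0} (hε : 0 < ε) {C : Finset E}
    (hCs : (C : Set E) ⊆ sphere 0 1) (hC : IsSeparated ε (C : Set E)) :
    (C.card : ℝ) ≤ (1 + 2 / ε) ^ finrank ℝ E := by
  borelize E
  set μ : Measure E := Measure.addHaar
  set r : ℝ := ε / 2
  have hr : 0 < r := by positivity
  have hdisj : (C : Set E).PairwiseDisjoint fun x => ball x r := by
    intro x hx y hy hxy
    refine ball_disjoint_ball ?_
    have : (ε : ℝ≥0∞) < edist x y := hC hx hy hxy
    rw [edist_nndist, ENNReal.coe_lt_coe, ← NNReal.coe_lt_coe, coe_nndist] at this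
    linarith [show r + r = ε from add_halves _]
  have hsub : (⋃ x ∈ C, ball x r) ⊆ ball 0 (1 + r) := by
    refine Set.iUnion₂_subset fun x hx y hy => ?_
    have hx1 : ‖x‖ = 1 := mem_sphere_zero_iff_norm.mp (hCs hx)
    rw [mem_ball_zero_iff]
    calc ‖y‖ ≤ ‖y - x‖ + ‖x‖ := norm_le_norm_sub_add y x
      _ < r + 1 := by rw [hx1, ← dist_eq_norm]; linarith [mem_ball.mp hy]
      _ = 1 + r := add_comm _ _
  have hvol : ENNReal.ofReal (C.card * r ^ finrank ℝ E) * μ (ball 0 1) ≤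
      ENNReal.ofReal ((1 + r) ^ finrank ℝ E) * μ (ball 0 1) := by
    calc ENNReal.ofReal (C.card * r ^ finrank ℝ E) * μ (ball 0 1)
        = ∑ x ∈ C, μ (ball x r) := by
          simp_rw [Measure.addHaar_ball_of_pos μ _ hr, Finset.sum_const, nsmul_eq_mul,
            ENNReal.ofReal_mul (Nat.cast_nonneg _), ENNReal.ofReal_natCast, mul_assoc]
      _ = μ (⋃ x ∈ C, ball x r) := (measure_biUnion_finset hdisj fun _ _ => measurableSet_ball).symm
      _ ≤ μ (ball 0 (1 + r)) := measure_mono hsub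
      _ = ENNReal.ofReal ((1 + r) ^ finrank ℝ E) * μ (ball 0 1) :=
          Measure.addHaar_ball_of_pos μ _ (by positivity)
  have hcard : (C.card : ℝ) * r ^ finrank ℝ E ≤ (1 + r) ^ finrank ℝ E :=
    (ENNReal.ofReal_le_ofReal_iff (by positivity)).mp <|
      (ENNReal.mul_le_mul_iff_left (measure_ball_pos μ 0 one_pos).ne'
        measure_ball_lt_top.ne).mp hvol
  have hratio : 1 + 2 / (ε : ℝ) = (1 + r) / r := by
    field_simp
    ring
  rw [hratio, div_pow, le_div_iff₀ (by positivity)]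
  exact hcard

lemma packingNumber_sphere_le {ε : ℝ≥0} (hε : 0 < ε) :
    packingNumber ε (sphere (0 : E) 1) ≤ ⌊(1 + 2 / (ε : ℝ)) ^ finrank ℝ E⌋₊ := by
  refine iSup₂_le fun C hCs => iSup_le fun hC => ?_
  by_contra! hlt
  obtain ⟨D, hDC, hD⟩ := Set.exists_subset_encard_eq (Order.add_one_le_of_lt hlt)
  have hDfin : D.Finite := Set.finite_of_encard_eq_coe hD
  have hcard := card_le_of_isSeparated_subset_sphere hε (C := hDfin.toFinset)
    (by simpa using hDC.trans hCs) (by simpa using hC.subset hDC)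
  rw [hDfin.encard_eq_coe_toFinset_card, ← ENat.natCast_one, ← ENat.natCast_add,
    ENat.natCast_inj] at hD
  rw [hD, Nat.cast_add, Nat.cast_one] at hcard
  linarith [Nat.lt_floor_add_one ((1 + 2 / (ε : ℝ)) ^ finrank ℝ E)]

lemma exists_finset_isCover_sphere {ε : ℝ≥0} (hε : 0 < ε) :
    ∃ N : Finset E, (N : Set E) ⊆ sphere 0 1 ∧ IsCover ε (sphere 0 1) (N : Set E) ∧
      (N.card : ℝ) ≤ (1 + 2 / ε) ^ finrank ℝ E := by
  have hcov := (coveringNumber_le_packingNumber ε _).trans (packingNumber_sphere_le (E := E) hε)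
  have hne : coveringNumber ε (sphere (0 : E) 1) ≠ ⊤ :=
    ne_top_of_le_ne_top (ENat.natCast_ne_top _) hcov
  have hfin := finite_minimalCover (ε := ε) (A := sphere (0 : E) 1)
  refine ⟨hfin.toFinset, by simpa using minimalCover_subset,
    by simpa using isCover_minimalCover hne, ?_⟩
  rw [← encard_minimalCover hne, hfin.encard_eq_coe_toFinset_card, ENat.natCast_le_natCast] at hcov
  exact (Nat.cast_le.mpr hcov).trans (Nat.floor_le (by positivity))

end SphereNet

lemma exists_mem_inner_ge_of_isCover {F : Type*} [NormedAddCommGroup F] [InnerProductSpace ℝ F]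
    {δ : ℝ≥0} {N : Set F} (hN : IsCover δ (sphere 0 1) N) {x : F} (hx : x ≠ 0) :
    ∃ θ ∈ N, (1 - δ) * ‖x‖ ≤ ⟪x, θ⟫ := by
  have hx' : ‖x‖ ≠ 0 := norm_ne_zero_iff.mpr hx
  set u := ‖x‖⁻¹ • x
  have hu : u ∈ sphere (0 : F) 1 := by
    rw [mem_sphere_zero_iff_norm, norm_smul, norm_inv, norm_norm, inv_mul_cancel₀ hx']
  obtain ⟨θ, hθN, huθ⟩ := hN hu
  have huθ : edist u θ ≤ δ := huθ
  rw [edist_nndist, ENNReal.coe_le_coe, ← NNReal.coe_le_coe, coe_nndist, dist_eq_norm] at huθ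
  refine ⟨θ, hθN, ?_⟩
  have hxu : ⟪x, u⟫ = ‖x‖ := by
    rw [real_inner_smul_right, real_inner_self_eq_norm_sq]
    field_simp
  calc (1 - δ) * ‖x‖ ≤ ‖x‖ - ‖x‖ * ‖u - θ‖ := by nlinarith [norm_nonneg x]
    _ ≤ ⟪x, u⟫ - ⟪x, u - θ⟫ := by
        rw [hxu]
        linarith [real_inner_le_norm x (u - θ)]
    _ = ⟪x, θ⟫ := by rw [inner_sub_right]; ring

section SubgaussianSum

variable {Ω : Type*} {mΩ : MeasurableSpace Ω} {μ : Measure Ω} {c : ℝ}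

lemma exp_mul_le_exp_mul_sq_mul_exp (hc : 0 < c) (t y : ℝ) :
    exp (t * y) ≤ exp (c * y ^ 2) * exp (t ^ 2 / (4 * c)) := by
  rw [← exp_add, exp_le_exp]
  have hsq : 0 ≤ (2 * c * y - t) ^ 2 / (4 * c) := by positivity
  have hid : (2 * c * y - t) ^ 2 / (4 * c) = c * y ^ 2 + t ^ 2 / (4 * c) - t * y := by
    field_simp
    ring
  linarith

lemma integrable_exp_mul_of_integrable_exp_sq {X : Ω → ℝ} (hc : 0 < c) (hX : AEMeasurable X μ)
    (hint : Integrable (fun ω => exp (c * X ω ^ 2)) μ) (t : ℝ) :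
    Integrable (fun ω => exp (t * X ω)) μ := by
  refine (hint.mul_const (exp (t ^ 2 / (4 * c)))).mono' (by fun_prop) ?_
  filter_upwards with ω
  rw [norm_of_nonneg (exp_pos _).le]
  exact exp_mul_le_exp_mul_sq_mul_exp hc t (X ω)

lemma mgf_le_of_integral_exp_sq_le {X : Ω → ℝ} (hc : 0 < c)
    (hint : Integrable (fun ω => exp (c * X ω ^ 2)) μ) (hψ : ∫ ω, exp (c * X ω ^ 2) ∂μ ≤ 2)
    (t : ℝ) : mgf X μ t ≤ 2 * exp (t ^ 2 / (4 * c)) :=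
  calc mgf X μ t ≤ ∫ ω, exp (c * X ω ^ 2) * exp (t ^ 2 / (4 * c)) ∂μ :=
        integral_mono_of_nonneg (.of_forall fun _ => (exp_pos _).le) (hint.mul_const _)
          (.of_forall fun ω => exp_mul_le_exp_mul_sq_mul_exp hc t (X ω))
    _ = (∫ ω, exp (c * X ω ^ 2) ∂μ) * exp (t ^ 2 / (4 * c)) := integral_mul_const _ _
    _ ≤ 2 * exp (t ^ 2 / (4 * c)) := by gcongr

lemma measureReal_sum_ge_le_of_integral_exp_sq_le {ι : Type*} [Fintype ι] {X : ι → Ω → ℝ}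
    (hindep : iIndepFun X μ) (hmeas : ∀ i, Measurable (X i)) (hc : 0 < c)
    (hint : ∀ i, Integrable (fun ω => exp (c * X i ω ^ 2)) μ)
    (hψ : ∀ i, ∫ ω, exp (c * X i ω ^ 2) ∂μ ≤ 2) {a : ℝ} (ha : 0 ≤ a) :
    μ.real {ω | a ≤ ∑ i, X i ω} ≤ 2 ^ Fintype.card ι * exp (-(c * a ^ 2 / Fintype.card ι)) := by
  have := hindep.isProbabilityMeasure
  set m : ℝ := (Fintype.card ι : ℝ)
  -- the Chernoff parameter minimizing `-t a + m t² / (4c)`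
  set t := 2 * c * a / m
  have hexponent : -t * a + m * (t ^ 2 / (4 * c)) = -(c * a ^ 2 / m) := by
    rcases eq_or_ne m 0 with hm | hm
    · simp [t, hm]
    · simp only [t]
      field_simp
      ring
  have hset : {ω | a ≤ ∑ i, X i ω} = {ω | a ≤ (∑ i, X i) ω} := by simp only [Finset.sum_apply]
  rw [hset]
  calc μ.real {ω | a ≤ (∑ i, X i) ω} ≤ exp (-t * a) * mgf (∑ i, X i) μ t :=
        measure_ge_le_exp_mul_mgf a (by positivity) <| hindep.integrable_exp_mul_sum hmeas
          fun i _ => integrable_exp_mul_of_integrable_exp_sq hc (hmeas i).aemeasurable (hint i) t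
    _ = exp (-t * a) * ∏ i, mgf (X i) μ t := by rw [hindep.mgf_sum hmeas]
    _ ≤ exp (-t * a) * ∏ _i : ι, 2 * exp (t ^ 2 / (4 * c)) := by
        gcongr with i
        · exact fun i _ => mgf_nonneg
        · exact mgf_le_of_integral_exp_sq_le hc (hint i) (hψ i) t
    _ = 2 ^ Fintype.card ι * exp (-(c * a ^ 2 / m)) := by
        rw [Finset.prod_const, Finset.card_univ, mul_pow, ← exp_nat_mul, mul_left_comm, ← exp_add,
          hexponent]

variable {F : Type*} [NormedAddCommGroup F] [InnerProductSpace ℝ F] [FiniteDimensional ℝ F]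
  [MeasurableSpace F] [BorelSpace F]

lemma measureReal_norm_sum_ge_le {ι : Type*} [Fintype ι] {Y : ι → Ω → F} {ν : Measure F}
    (hindep : iIndepFun Y μ) (hmeas : ∀ i, Measurable (Y i)) (hlaw : ∀ i, μ.map (Y i) = ν)
    (hc : 0 < c) (hint : ∀ θ : F, ‖θ‖ = 1 → Integrable (fun x => exp (c * ⟪x, θ⟫ ^ 2)) ν)
    (hψ : ∀ θ : F, ‖θ‖ = 1 → ∫ x, exp (c * ⟪x, θ⟫ ^ 2) ∂ν ≤ 2) {a : ℝ} (ha : 0 < a) :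
    μ.real {ω | 2 * a ≤ ‖∑ i, Y i ω‖} ≤
      5 ^ finrank ℝ F * (2 ^ Fintype.card ι * exp (-(c * a ^ 2 / Fintype.card ι))) := by
  have := hindep.isProbabilityMeasure
  obtain ⟨N, hNs, hNcov, hNcard⟩ := exists_finset_isCover_sphere (E := F) (ε := 1 / 2) (by norm_num)
  have hsub : {ω | 2 * a ≤ ‖∑ i, Y i ω‖} ⊆ ⋃ θ ∈ N, {ω | a ≤ ∑ i, ⟪Y i ω, θ⟫} := by
    intro ω hω
    have hne : ∑ i, Y i ω ≠ 0 := norm_pos_iff.mp (by linarith [hω.out])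
    obtain ⟨θ, hθN, hθ⟩ := exists_mem_inner_ge_of_isCover hNcov hne
    refine Set.mem_iUnion₂.mpr ⟨θ, hθN, ?_⟩
    rw [Set.mem_ofPred_eq, ← sum_inner]
    push_cast at hθ
    linarith [hω.out]
  have hdir : ∀ θ ∈ N, μ.real {ω | a ≤ ∑ i, ⟪Y i ω, θ⟫} ≤
      2 ^ Fintype.card ι * exp (-(c * a ^ 2 / Fintype.card ι)) := by
    intro θ hθ
    have hθ1 : ‖θ‖ = 1 := mem_sphere_zero_iff_norm.mp (hNs hθ)
    have hcont : Continuous fun x : F => exp (c * ⟪x, θ⟫ ^ 2) := by fun_prop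
    refine measureReal_sum_ge_le_of_integral_exp_sq_le
      (hindep.comp _ fun _ => (continuous_id.inner continuous_const).measurable)
      (fun i => (continuous_id.inner continuous_const).measurable.comp (hmeas i)) hc
      (fun i => ?_) (fun i => ?_) ha.le
    · have h := hint θ hθ1
      rwa [← hlaw i, integrable_map_measure hcont.aestronglyMeasurable (hmeas i).aemeasurable] at h
    · have h := hψ θ hθ1
      rwa [← hlaw i, integral_map (hmeas i).aemeasurable hcont.aestronglyMeasurable] at h
  have hfive : (1 + 2 / ((1 / 2 : ℝ≥0) : ℝ)) = 5 := by norm_num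
  calc μ.real {ω | 2 * a ≤ ‖∑ i, Y i ω‖}
      ≤ μ.real (⋃ θ ∈ N, {ω | a ≤ ∑ i, ⟪Y i ω, θ⟫}) := measureReal_mono hsub (measure_ne_top _ _)
    _ ≤ ∑ θ ∈ N, μ.real {ω | a ≤ ∑ i, ⟪Y i ω, θ⟫} := measureReal_biUnion_finset_le _ _
    _ ≤ N.card * (2 ^ Fintype.card ι * exp (-(c * a ^ 2 / Fintype.card ι))) := by
        simpa using Finset.sum_le_sum hdir
    _ ≤ 5 ^ finrank ℝ F * (2 ^ Fintype.card ι * exp (-(c * a ^ 2 / Fintype.card ι))) := by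
        gcongr
        rwa [hfive] at hNcard

end SubgaussianSum

section SphereUniform

instance (n : ℕ) [NeZero n] :
    NeZero (volume : Measure (EuclideanSpace ℝ (Fin n))).toSphere := by
  refine ⟨fun h => ?_⟩
  have huniv := Measure.toSphere_apply_univ (volume : Measure (EuclideanSpace ℝ (Fin n)))
  rw [h, finrank_euclideanSpace_fin, Measure.coe_zero, Pi.zero_apply] at huniv
  exact mul_ne_zero (Nat.cast_ne_zero.mpr (NeZero.ne n)) (measure_ball_pos volume 0 one_pos).ne'
    huniv.symm

instance (n : ℕ) [NeZero n] : IsProbabilityMeasure (sphereUniform n) :=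
  Measure.isProbabilityMeasure_map measurable_subtype_coe.aemeasurable

lemma Continuous.integrable_sphereUniform {n : ℕ} [NeZero n] {E : Type*} [NormedAddCommGroup E]
    {g : EuclideanSpace ℝ (Fin n) → E} (hg : Continuous g) : Integrable g (sphereUniform n) := by
  rw [sphereUniform,
    integrable_map_measure hg.aestronglyMeasurable measurable_subtype_coe.aemeasurable]
  exact (hg.comp continuous_subtype_val).integrable_of_hasCompactSupport
    (HasCompactSupport.of_compactSpace _)

end SphereUniform

lemma ofReal_one_sub_le_of_measureReal_compl_le {Ω : Type*} {mΩ : MeasurableSpace Ω}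
    {μ : Measure Ω} [IsProbabilityMeasure μ] {s : Set Ω} {p : ℝ} (h : μ.real sᶜ ≤ p) :
    ENNReal.ofReal (1 - p) ≤ μ s := by
  have hcover : 1 ≤ μ.real s + μ.real sᶜ := by
    rw [← probReal_univ (μ := μ), ← Set.union_compl_self s]
    exact measureReal_union_le _ _
  rw [ENNReal.ofReal_le_iff_le_toReal (measure_ne_top _ _)]
  change 1 - p ≤ μ.real s
  linarith

lemma measureReal_norm_sum_ge_le_of_sphereUniform {A : ℝ} (hA : A ≠ 0) {n : ℕ} [NeZero n]
    (hpsi : ∀ θ : EuclideanSpace ℝ (Fin n), ‖θ‖ = 1 →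
      ∫ x, exp (n * |⟪x, θ⟫| ^ 2 / A ^ 2) ∂(sphereUniform n) ≤ 2)
    {Ω : Type*} {mΩ : MeasurableSpace Ω} {μ : Measure Ω} {P : Fin n → Ω → EuclideanSpace ℝ (Fin n)}
    (hmeas : ∀ i, Measurable (P i)) (hindep : iIndepFun P μ)
    (hdist : ∀ i, μ.map (P i) = sphereUniform n) {ε : ℝ} (hε : 0 < ε) :
    μ.real {ω | 2 * (ε * n) ≤ ‖∑ i, P i ω‖} ≤ 5 ^ n * (2 ^ n * exp (-(ε ^ 2 * n ^ 2 / A ^ 2))) := by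
  have hn : (n : ℝ) ≠ 0 := Nat.cast_ne_zero.mpr (NeZero.ne n)
  have hbad := measureReal_norm_sum_ge_le hindep hmeas hdist (c := n / A ^ 2) (by positivity)
    (fun θ _ => Continuous.integrable_sphereUniform (by fun_prop))
    (fun θ hθ => by simpa only [sq_abs, mul_div_right_comm] using hpsi θ hθ)
    (a := ε * n) (by positivity)
  have hexponent : n / A ^ 2 * (ε * n) ^ 2 / n = ε ^ 2 * n ^ 2 / A ^ 2 := by
    field_simp
  rwa [finrank_euclideanSpace_fin, Fintype.card_fin, hexponent] at hbad

/-- If `A` is an absolute constant witnessing the uniform `ψ₂`-bound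
`‖√n ⟨·, θ⟩‖_{ψ₂} ≤ A` for all unit vectors `θ`, and `P₁, …, P_n` are independent random
vectors uniformly distributed on the sphere, then `|∑ P_i| < 2εn` with probability at
least `1 - 2 exp(-ε²n²/(8A²) + n log 5)`. -/
theorem stmt9 (A : ℝ)
    (hpsi : ∀ (k : ℕ), 1 ≤ k → ∀ θ : EuclideanSpace ℝ (Fin k), ‖θ‖ = 1 →
      ∫ P, Real.exp (k * |⟪P, θ⟫| ^ 2 / A ^ 2) ∂(sphereUniform k) ≤ 2)
    (n : ℕ)
    (Ω : Type) (_ : MeasurableSpace Ω) (μ : Measure Ω) (hμ : IsProbabilityMeasure μ)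
    (P : Fin n → Ω → EuclideanSpace ℝ (Fin n))
    (hmeas : ∀ i, Measurable (P i))
    (hindep : ProbabilityTheory.iIndepFun P μ)
    (hdist : ∀ i, Measure.map (P i) μ = sphereUniform n)
    (ε : ℝ) (hε : 0 < ε) :
    ENNReal.ofReal (1 - 2 * Real.exp (-(ε ^ 2 * n ^ 2) / (8 * A ^ 2) + n * Real.log 5)) ≤
      μ {ω | ‖∑ i, P i ω‖ < 2 * ε * n} := by
  set b := ε ^ 2 * n ^ 2 / (8 * A ^ 2)
  have hbound : 2 * exp (-(ε ^ 2 * n ^ 2) / (8 * A ^ 2) + n * log 5) = 5 ^ n * (2 * exp (-b)) := by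
    rw [neg_div, exp_add, exp_nat_mul, exp_log (by norm_num)]
    ring
  rw [hbound]
  rcases le_or_gt 1 (5 ^ n * (2 * exp (-b))) with htriv | hnontriv
  · simp [ENNReal.ofReal_eq_zero.mpr (sub_nonpos.mpr htriv)]
  have h2n : (2 : ℝ) ^ n < exp b := by
    have h25 : (2 : ℝ) ^ n ≤ 5 ^ n := pow_le_pow_left₀ (by norm_num) (by norm_num) n
    rw [exp_neg] at hnontriv
    field_simp at hnontriv
    linarith [pow_pos (by norm_num : (0 : ℝ) < 5) n]
  have hb0 : 0 < b := Real.one_lt_exp_iff.mp ((one_le_pow₀ (by norm_num)).trans_lt h2n)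
  have hA0 : A ≠ 0 := by rintro rfl; simp [b] at hb0
  have : NeZero n := ⟨by rintro rfl; simp [b] at hb0⟩
  have h8b : ε ^ 2 * n ^ 2 / A ^ 2 = 8 * b := by
    simp only [b]
    field_simp
  refine ofReal_one_sub_le_of_measureReal_compl_le ?_
  calc μ.real {ω | ‖∑ i, P i ω‖ < 2 * ε * n}ᶜ = μ.real {ω | 2 * (ε * n) ≤ ‖∑ i, P i ω‖} := by
        simp only [Set.compl_ofPred, not_lt, mul_assoc]
    _ ≤ 5 ^ n * (2 ^ n * exp (-(8 * b))) := h8b ▸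
        measureReal_norm_sum_ge_le_of_sphereUniform hA0 (hpsi n NeZero.one_le) hmeas hindep hdist hε
    _ ≤ 5 ^ n * (exp b * exp (-(8 * b))) := by gcongr
    _ ≤ 5 ^ n * (2 * exp (-b)) := by
        rw [← exp_add]
        gcongr
        exact (exp_le_exp.mpr (by linarith)).trans (le_mul_of_one_le_left (exp_pos _).le one_le_two)
end
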